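/- arXiv:1305.4752 — 3 statements merged into one kernel-verified Lean document; each statement's English description precedes it below -/
import Mathlib

section
/- Let m, n ≥ 1 with m + n ≥ 3, let K : ℝ^{m+n} → ℂ be measurable satisfying |K(x₁,…,x_m,y₁,…,y_n)| ≤ C · (∑_{i₁<i₂} |x_{i₁}−x_{i₂}| + ∑_{j₁<j₂} |y_{j₁}−y_{j₂}|)^{2−m−n} off the diagonal. Let I be an interval of length δ with midpoint x₀, let J be an interval of length δ, and suppose m ≥ 2. Then ∫_J ∫_{I_left × I_right × I^{m−2} × J^{n−1}} |K| dx₁…dx_m dy₁…dy_{n−1} dy_n ≤ C' δ², where C' depends only on C, m, n, and I_left, I_right denote the left and right halves of I. -/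
/-!
Write `n = k + 1`, `d = m + k` and `P = pairSum z`. On the region of integration `x₀` lies
between `x 0` and `x 1`, so each of the `d` distances `|x i - x₀|` and `|y (j + 1) - y 0|` is at
most `P`. Rather than passing to spherical coordinates, write the kernel bound `P ^ (1 - d)` as
`(P ^ (-s)) ^ d` with `s = (d - 1) / d < 1` and bound the `d` factors by the `(-s)`-th powers of
these distances. The majorant is a product of one-variable functions `|t - c| ^ (-s)`, each with
integral at most `2 δ ^ (1 - s) / (1 - s)` near `c`; together they contribute
`δ ^ (d (1 - s)) = δ`, and the free variable `y 0` one more factor `δ`.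
-/

open MeasureTheory Finset

/-- The sum of pairwise distances among the `x`-coordinates and among the `y`-coordinates. -/
noncomputable def pairSum {m n : ℕ} (z : (Fin m → ℝ) × (Fin n → ℝ)) : ℝ :=
  (∑ p ∈ Finset.univ.filter (fun p : Fin m × Fin m => p.1 < p.2), |z.1 p.1 - z.1 p.2|) +
  ∑ p ∈ Finset.univ.filter (fun p : Fin n × Fin n => p.1 < p.2), |z.2 p.1 - z.2 p.2|

/-- Membership in the diagonal `D = {(x,…,x,y,…,y)}`. -/
def onDiag {m n : ℕ} (z : (Fin m → ℝ) × (Fin n → ℝ)) : Prop :=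
  (∀ i i', z.1 i = z.1 i') ∧ (∀ j j', z.2 j = z.2 j')

open scoped ENNReal

theorem abs_sub_le_sum_pairs {ι : Type*} [Fintype ι] [LinearOrder ι] (v : ι → ℝ)
    (i i' : ι) :
    |v i - v i'| ≤ ∑ p ∈ univ.filter (fun p : ι × ι => p.1 < p.2), |v p.1 - v p.2| := by
  have hlt : ∀ {a b : ι}, a < b →
      |v a - v b| ≤ ∑ p ∈ univ.filter (fun p : ι × ι => p.1 < p.2), |v p.1 - v p.2| :=
    fun {a b} hab => single_le_sum (f := fun p : ι × ι => |v p.1 - v p.2|)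
      (fun _ _ => abs_nonneg _) (mem_filter.2 ⟨mem_univ (a, b), hab⟩)
  rcases lt_trichotomy i i' with h | rfl | h
  · exact hlt h
  · simpa using sum_nonneg fun p _ => abs_nonneg _
  · exact abs_sub_comm (v i) (v i') ▸ hlt h

section pairSum

variable {m n : ℕ} (z : (Fin m → ℝ) × (Fin n → ℝ))

theorem abs_sub_le_pairSum_fst (i i' : Fin m) : |z.1 i - z.1 i'| ≤ pairSum z :=
  (abs_sub_le_sum_pairs z.1 i i').trans
    (le_add_of_nonneg_right (sum_nonneg fun _ _ => abs_nonneg _))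

theorem abs_sub_le_pairSum_snd (j j' : Fin n) : |z.2 j - z.2 j'| ≤ pairSum z :=
  (abs_sub_le_sum_pairs z.2 j j').trans
    (le_add_of_nonneg_left (sum_nonneg fun _ _ => abs_nonneg _))

theorem abs_sub_le_pairSum_of_le_of_le {i₀ i₁ : Fin m} {x₀ : ℝ} (h₀ : z.1 i₀ ≤ x₀)
    (h₁ : x₀ ≤ z.1 i₁) (i : Fin m) : |z.1 i - x₀| ≤ pairSum z := by
  have h₀' := abs_le.1 (abs_sub_le_pairSum_fst z i i₀)
  have h₁' := abs_le.1 (abs_sub_le_pairSum_fst z i i₁)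
  exact abs_le.2 ⟨by linarith, by linarith⟩

end pairSum

theorem lintegral_Ioo_enorm_rpow_neg {s : ℝ} (hs : s < 1) {r : ℝ} (hr : 0 < r) :
    ∫⁻ u in Set.Ioo 0 r, ‖u‖ₑ ^ (-s) = ENNReal.ofReal (r ^ (1 - s) / (1 - s)) := by
  have hint : IntegrableOn (fun u : ℝ => u ^ (-s)) (Set.Ioo 0 r) :=
    (intervalIntegral.integrableOn_Ioo_rpow_iff hr).2 (by linarith)
  have hnonneg : ∀ᵐ u ∂volume.restrict (Set.Ioo 0 r), 0 ≤ u ^ (-s) :=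
    (ae_restrict_iff' measurableSet_Ioo).2 (ae_of_all _ fun u hu => Real.rpow_nonneg hu.1.le _)
  calc ∫⁻ u in Set.Ioo 0 r, ‖u‖ₑ ^ (-s)
      = ∫⁻ u in Set.Ioo 0 r, ENNReal.ofReal (u ^ (-s)) := by
        refine setLIntegral_congr_fun measurableSet_Ioo fun u hu => ?_
        rw [Real.enorm_of_nonneg hu.1.le, ENNReal.ofReal_rpow_of_pos hu.1]
    _ = ENNReal.ofReal (∫ u in (0 : ℝ)..r, u ^ (-s)) := by
        rw [intervalIntegral.integral_of_le hr.le, integral_Ioc_eq_integral_Ioo,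
          ofReal_integral_eq_lintegral_ofReal hint hnonneg]
    _ = ENNReal.ofReal (r ^ (1 - s) / (1 - s)) := by
        rw [integral_rpow (Or.inl (by linarith)), Real.zero_rpow (by linarith), sub_zero,
          neg_add_eq_sub]

theorem lintegral_ball_enorm_sub_rpow_neg {s : ℝ} (hs : s < 1) (c : ℝ) {r : ℝ} (hr : 0 < r) :
    ∫⁻ t in Metric.ball c r, ‖t - c‖ₑ ^ (-s) = ENNReal.ofReal (2 * r ^ (1 - s) / (1 - s)) := by
  have htrans := (measurePreserving_sub_right volume c).setLIntegral_comp_preimage_emb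
    (measurableEmbedding_subRight c) (fun u => ‖u‖ₑ ^ (-s)) (Set.Ioo (-r) r)
  rw [Set.preimage_sub_const_Ioo, neg_add_eq_sub, add_comm, ← Real.ball_eq_Ioo] at htrans
  have hneg := (Measure.measurePreserving_neg volume).setLIntegral_comp_preimage_emb
    (Homeomorph.neg ℝ).measurableEmbedding (fun u => ‖u‖ₑ ^ (-s)) (Set.Ioo 0 r)
  simp only [Set.neg_preimage, Set.neg_Ioo, neg_zero, enorm_neg] at hneg
  rw [htrans, ← Set.Ioc_union_Ioo_eq_Ioo (neg_nonpos.2 hr.le) hr,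
    lintegral_union measurableSet_Ioo
      (Set.Ioc_disjoint_Ioi_same.mono_right Set.Ioo_subset_Ioi_self),
    Measure.restrict_congr_set Ioo_ae_eq_Ioc.symm, hneg, lintegral_Ioo_enorm_rpow_neg hs hr,
    ← ENNReal.ofReal_add (by positivity) (by positivity)]
  ring_nf

section Pi

variable {α : Type*} [MeasurableSpace α] (μ : Measure α) [SigmaFinite μ]

theorem lintegral_pi_succ_eq_lintegral_prod {k : ℕ} (F : α → (Fin k → α) → ℝ≥0∞) :
    ∫⁻ y, F (y 0) (Fin.tail y) ∂Measure.pi (fun _ : Fin (k + 1) => μ) =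
      ∫⁻ p, F p.1 p.2 ∂μ.prod (Measure.pi fun _ : Fin k => μ) := by
  rw [← (measurePreserving_piFinSuccAbove (fun _ : Fin (k + 1) => μ) 0).symm.lintegral_comp_emb
    (MeasurableEquiv.measurableEmbedding _)]
  simp [MeasurableEquiv.piFinSuccAbove_symm_apply, Fin.insertNthEquiv]

theorem lintegral_pi_prod_eq_pow {f : α → ℝ≥0∞} (hf : Measurable f) (n : ℕ) :
    ∫⁻ x, ∏ i : Fin n, f (x i) ∂Measure.pi (fun _ => μ) = (∫⁻ t, f t ∂μ) ^ n := by
  induction n with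
  | zero => simp
  | succ n ih =>
    simp_rw [Fin.prod_univ_succ]
    refine (lintegral_pi_succ_eq_lintegral_prod μ (fun t w => f t * ∏ i, f (w i))).trans ?_
    rw [lintegral_prod_mul (g := fun w : Fin n → α => ∏ i, f (w i)) hf.aemeasurable
      (Measurable.aemeasurable (by fun_prop)), ih, pow_succ']

theorem lintegral_pi_prod_apply_zero_succ_le {f : α → α → ℝ≥0∞}
    (hf : Measurable (Function.uncurry f)) {B : ℝ≥0∞} (hB : ∀ᵐ t ∂μ, ∫⁻ u, f t u ∂μ ≤ B)
    (k : ℕ) :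
    ∫⁻ y, ∏ j : Fin k, f (y 0) (y j.succ) ∂Measure.pi (fun _ : Fin (k + 1) => μ) ≤
      μ Set.univ * B ^ k := by
  refine (lintegral_pi_succ_eq_lintegral_prod μ (fun t w => ∏ j, f t (w j))).trans_le ?_
  rw [lintegral_prod _ (Measurable.aemeasurable (by fun_prop))]
  calc ∫⁻ t, ∫⁻ w, ∏ j, f t (w j) ∂Measure.pi (fun _ => μ) ∂μ
      = ∫⁻ t, (∫⁻ u, f t u ∂μ) ^ k ∂μ :=
        lintegral_congr fun t =>
          lintegral_pi_prod_eq_pow μ (hf.comp measurable_prodMk_left) k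
    _ ≤ ∫⁻ _, B ^ k ∂μ := lintegral_mono_ae (hB.mono fun t ht => pow_le_pow_left' ht k)
    _ = μ Set.univ * B ^ k := by rw [lintegral_const, mul_comm]

end Pi

theorem enorm_le_prod_rpow_of_lt_of_le {E : Type*} [NormedAddCommGroup E] {m k : ℕ} {C : ℝ}
    (hC : 0 ≤ C) {K : (Fin m → ℝ) × (Fin (k + 1) → ℝ) → E}
    (hK : ∀ z, ¬ onDiag z → ‖K z‖ ≤ C * pairSum z ^ ((2 : ℝ) - m - ↑(k + 1)))
    {s : ℝ} (hs : s * (m + k) = m + k - 1)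
    {z : (Fin m → ℝ) × (Fin (k + 1) → ℝ)} {i₀ i₁ : Fin m} {x₀ : ℝ} (h₀ : z.1 i₀ < x₀)
    (h₁ : x₀ ≤ z.1 i₁) :
    ‖K z‖ₑ ≤ ENNReal.ofReal C *
      ((∏ i, ‖z.1 i - x₀‖ₑ ^ (-s)) * ∏ j : Fin k, ‖z.2 j.succ - z.2 0‖ₑ ^ (-s)) := by
  set P := pairSum z
  have hP : 0 < P := (abs_pos.2 (sub_ne_zero.2 (h₀.trans_le h₁).ne)).trans_le
    (abs_sub_le_pairSum_fst z i₀ i₁)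
  have hz : ¬ onDiag z := fun h => (h₀.trans_le h₁).ne (h.1 i₀ i₁)
  have hm : (1 : ℝ) ≤ m := by exact_mod_cast i₀.pos
  have hs₀ : 0 ≤ s := by nlinarith [(k.cast_nonneg : (0 : ℝ) ≤ k)]
  have hexp : (2 : ℝ) - m - ↑(k + 1) = -s * ↑(m + k) := by push_cast; linarith
  have hfactor : ∀ a : ℝ, |a| ≤ P → ENNReal.ofReal P ^ (-s) ≤ ‖a‖ₑ ^ (-s) := fun a ha => by
    rw [ENNReal.rpow_neg, ENNReal.rpow_neg, Real.enorm_eq_ofReal_abs]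
    gcongr
  calc ‖K z‖ₑ = ENNReal.ofReal ‖K z‖ := (ofReal_norm _).symm
    _ ≤ ENNReal.ofReal (C * P ^ ((2 : ℝ) - m - ↑(k + 1))) :=
        ENNReal.ofReal_le_ofReal (hK z hz)
    _ = ENNReal.ofReal C * ((ENNReal.ofReal P ^ (-s)) ^ m * (ENNReal.ofReal P ^ (-s)) ^ k) := by
      rw [ENNReal.ofReal_mul hC, ← ENNReal.ofReal_rpow_of_pos hP, hexp,
        ENNReal.rpow_mul_natCast, pow_add]
    _ ≤ _ := by
      gcongr
      · simpa using pow_card_le_prod univ _ _ fun i _ =>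
          hfactor _ (abs_sub_le_pairSum_of_le_of_le z h₀.le h₁ i)
      · simpa using pow_card_le_prod univ _ _ fun (j : Fin k) _ =>
          hfactor _ (abs_sub_le_pairSum_snd z j.succ 0)

theorem lintegral_box_prod_rpow_le {m k : ℕ} (hmk : m + k ≠ 0) {s : ℝ}
    (hs : s * (m + k) = m + k - 1) (x₀ b : ℝ) {δ : ℝ} (hδ : 0 < δ) :
    ∫⁻ z in (Set.univ.pi fun _ : Fin m => Metric.ball x₀ δ) ×ˢ
        (Set.univ.pi fun _ : Fin (k + 1) => Set.Ico b (b + δ)),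
      (∏ i, ‖z.1 i - x₀‖ₑ ^ (-s)) * ∏ j : Fin k, ‖z.2 j.succ - z.2 0‖ₑ ^ (-s) ≤
    ENNReal.ofReal ((2 * (m + k : ℕ)) ^ (m + k) * δ ^ 2) := by
  have hs₁ : 1 - s = ((m + k : ℕ) : ℝ)⁻¹ := by
    have : ((m + k : ℕ) : ℝ) ≠ 0 := by exact_mod_cast hmk
    field_simp
    push_cast
    linarith
  have hs₁' : s < 1 := by
    have : (0 : ℝ) < ((m + k : ℕ) : ℝ)⁻¹ := by positivity
    linarith
  set B := ENNReal.ofReal (2 * δ ^ (1 - s) / (1 - s)) with hB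
  have hJ : ∀ᵐ t ∂volume.restrict (Set.Ico b (b + δ)),
      ∫⁻ u in Set.Ico b (b + δ), ‖u - t‖ₑ ^ (-s) ≤ B := by
    refine (ae_restrict_iff' measurableSet_Ico).2 (ae_of_all _ fun t ht => ?_)
    rw [hB, ← lintegral_ball_enorm_sub_rpow_neg hs₁' t hδ]
    refine lintegral_mono_set fun u hu => ?_
    rw [Real.ball_eq_Ioo]
    exact ⟨by linarith [ht.2, hu.1], by linarith [ht.1, hu.2]⟩
  rw [Measure.volume_eq_prod, ← Measure.prod_restrict, volume_pi, volume_pi,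
    Measure.restrict_pi_pi, Measure.restrict_pi_pi,
    lintegral_prod_mul (f := fun x : Fin m → ℝ => ∏ i, ‖x i - x₀‖ₑ ^ (-s))
      (g := fun y : Fin (k + 1) → ℝ => ∏ j : Fin k, ‖y j.succ - y 0‖ₑ ^ (-s))
      (Measurable.aemeasurable (by fun_prop)) (Measurable.aemeasurable (by fun_prop)),
    lintegral_pi_prod_eq_pow _ (f := fun t => ‖t - x₀‖ₑ ^ (-s)) (by fun_prop),
    lintegral_ball_enorm_sub_rpow_neg hs₁' x₀ hδ, ← hB]
  calc B ^ m * ∫⁻ y, ∏ j : Fin k, ‖y j.succ - y 0‖ₑ ^ (-s)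
        ∂(Measure.pi fun _ => volume.restrict (Set.Ico b (b + δ)))
      ≤ B ^ m * (volume.restrict (Set.Ico b (b + δ)) Set.univ * B ^ k) := by
        gcongr
        exact lintegral_pi_prod_apply_zero_succ_le _ (f := fun t u => ‖u - t‖ₑ ^ (-s))
          (by fun_prop) hJ k
    _ = ENNReal.ofReal ((2 * (m + k : ℕ)) ^ (m + k) * δ ^ 2) := by
        rw [Measure.restrict_apply_univ, Real.volume_Ico, add_sub_cancel_left, mul_left_comm,
          ← pow_add, hB, hs₁, ← ENNReal.ofReal_pow (by positivity), ← ENNReal.ofReal_mul hδ.le]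
        congr 1
        rw [div_inv_eq_mul, mul_right_comm, mul_pow,
          Real.rpow_inv_natCast_pow hδ.le (by exact_mod_cast hmk)]
        ring

/-- Integrating a Calderón–Zygmund kernel of homogeneity `2-m-n` over
`I_left × I_right × I^{m-2} × J^n`, where `I` has midpoint `x₀` and length `δ`,
gives at most a constant (depending only on `C`, `m`, `n`) times `δ²`. -/
theorem stmt1 (m n : ℕ) (hm : 2 ≤ m) (hn : 1 ≤ n) (C : ℝ) (hC : 0 ≤ C) :
    ∃ C' : ℝ, 0 ≤ C' ∧
      ∀ (K : (Fin m → ℝ) × (Fin n → ℝ) → ℂ), Measurable K →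
      (∀ z, ¬ onDiag z → ‖K z‖ ≤ C * pairSum z ^ ((2 : ℝ) - m - n)) →
      ∀ (δ x₀ b : ℝ), 0 < δ →
      (∫⁻ z in {z : (Fin m → ℝ) × (Fin n → ℝ) |
          z.1 ⟨0, by omega⟩ ∈ Set.Ico (x₀ - δ / 2) x₀ ∧
          z.1 ⟨1, by omega⟩ ∈ Set.Ico x₀ (x₀ + δ / 2) ∧
          (∀ i : Fin m, 2 ≤ (i : ℕ) → z.1 i ∈ Set.Ico (x₀ - δ / 2) (x₀ + δ / 2)) ∧
          (∀ j : Fin n, z.2 j ∈ Set.Ico b (b + δ))},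
        (‖K z‖₊ : ENNReal)) ≤ ENNReal.ofReal (C' * δ ^ 2) := by
  obtain ⟨k, rfl⟩ : ∃ k, n = k + 1 := ⟨n - 1, by omega⟩
  have hmk : m + k ≠ 0 := by omega
  obtain ⟨s, hs⟩ : ∃ s : ℝ, s * (m + k) = m + k - 1 :=
    ⟨_, div_mul_cancel₀ _ (by exact_mod_cast hmk)⟩
  refine ⟨C * (2 * (m + k : ℕ)) ^ (m + k), by positivity, fun K _ hK δ x₀ b hδ => ?_⟩
  calc _ ≤ ∫⁻ z in (Set.univ.pi fun _ : Fin m => Metric.ball x₀ δ) ×ˢ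
          (Set.univ.pi fun _ : Fin (k + 1) => Set.Ico b (b + δ)), ENNReal.ofReal C *
          ((∏ i, ‖z.1 i - x₀‖ₑ ^ (-s)) * ∏ j : Fin k, ‖z.2 j.succ - z.2 0‖ₑ ^ (-s)) := ?_
    _ ≤ ENNReal.ofReal C * ENNReal.ofReal ((2 * (m + k : ℕ)) ^ (m + k) * δ ^ 2) := by
      rw [lintegral_const_mul _ (by fun_prop)]
      gcongr
      exact lintegral_box_prod_rpow_le hmk hs x₀ b hδ
    _ = ENNReal.ofReal (C * (2 * (m + k : ℕ)) ^ (m + k) * δ ^ 2) := by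
      rw [← ENNReal.ofReal_mul hC, mul_assoc]
  refine (setLIntegral_mono (by fun_prop) fun z hz => ?_).trans (lintegral_mono_set ?_)
  · exact enorm_le_prod_rpow_of_lt_of_le hC hK hs hz.1.2 hz.2.1.1
  have hI : Set.Ico (x₀ - δ / 2) (x₀ + δ / 2) ⊆ Metric.ball x₀ δ := fun t ht => by
    rw [Real.ball_eq_Ioo]
    exact ⟨by linarith [ht.1], by linarith [ht.2]⟩
  rintro z ⟨h₀, h₁, h₂, hy⟩
  refine ⟨fun i _ => ?_, fun j _ => hy j⟩
  rcases i with ⟨_ | _ | i, hi⟩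
  exacts [hI ⟨h₀.1, by linarith [h₀.2]⟩, hI ⟨by linarith [h₁.1], h₁.2⟩,
    hI (h₂ ⟨i + 2, hi⟩ (by simp))]
end

section
/- Let K : ℝ^{m+n} → ℂ be integrable and constant on every (m+n)-dimensional dyadic cube I₁ × ⋯ × I_m × J₁ × ⋯ × J_n disjoint from the diagonal D. Suppose a^{(1)}, …, a^{(m)}, b^{(1)}, …, b^{(n)} ∈ {𝟏, 𝐡} and at least one of them equals 𝐡. If the dyadic intervals I₁, …, I_m, J₁, …, J_n all have the same length but are not all of the form I₁ = ⋯ = I_m and J₁ = ⋯ = J_n, then ⟨K, a^{(1)}_{I₁} ⊗ ⋯ ⊗ a^{(m)}_{I_m} ⊗ b^{(1)}_{J₁} ⊗ ⋯ ⊗ b^{(n)}_{J_n}⟩_{L²(ℝ^{m+n})} = 0. -/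
open MeasureTheory

/-- The dyadic interval `[2^{-k} ℓ, 2^{-k} (ℓ+1))`. -/
def dyI (k l : ℤ) : Set ℝ := Set.Ico ((2:ℝ) ^ (-k) * l) ((2:ℝ) ^ (-k) * (l + 1))

/-- The characteristic function `𝟏_I` of a dyadic interval. -/
noncomputable def oneI (k l : ℤ) : ℝ → ℝ := (dyI k l).indicator 1

/-- The L^∞-normalized Haar function `𝐡_I = 𝟏_{I_left} - 𝟏_{I_right}`. -/
noncomputable def haarI (k l : ℤ) : ℝ → ℝ :=
  fun x => (dyI (k+1) (2*l)).indicator 1 x - (dyI (k+1) (2*l+1)).indicator 1 x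

/-- Wavelet factor: Haar function if the flag is `true`, characteristic function otherwise. -/
noncomputable def wfactor (b : Bool) (k l : ℤ) : ℝ → ℝ := if b then haarI k l else oneI k l

/-! A point of the cube `∏ I_i × ∏ J_j` on the diagonal would force all `I_i` to coincide and all
`J_j` to coincide, so the cube misses the diagonal and `K` equals a constant `c` on the support of
the tensor product. The coefficient is then `c` times a product of one-dimensional integrals, one
of which is the integral of a Haar function. -/

lemma two_zpow_mul_mem_dyI (k l : ℤ) : (2:ℝ) ^ (-k) * l ∈ dyI k l :=
  ⟨le_rfl, by have := zpow_pos (two_pos (α := ℝ)) (-k); linarith⟩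

lemma eq_of_mem_dyI {k l l' : ℤ} {x : ℝ} (h : x ∈ dyI k l) (h' : x ∈ dyI k l') : l = l' := by
  have hp := zpow_pos (two_pos (α := ℝ)) (-k)
  obtain ⟨h₁, h₂⟩ := h
  obtain ⟨h₁', h₂'⟩ := h'
  have hlt : (l:ℝ) < l' + 1 := lt_of_mul_lt_mul_left (h₁.trans_lt h₂') hp.le
  have hlt' : (l':ℝ) < l + 1 := lt_of_mul_lt_mul_left (h₁'.trans_lt h₂) hp.le
  norm_cast at hlt hlt'
  omega

lemma dyI_succ_subset {k l a : ℤ} (ha : 0 ≤ a) (ha' : a ≤ 1) :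
    dyI (k + 1) (2 * l + a) ⊆ dyI k l := by
  have hscale : (2:ℝ) ^ (-k) = (2:ℝ) ^ (-(k + 1)) * 2 := by
    rw [← zpow_add_one₀ two_ne_zero]; ring_nf
  have hp := zpow_pos (two_pos (α := ℝ)) (-(k + 1))
  have ha₀ : (0:ℝ) ≤ a := by exact_mod_cast ha
  have ha₁ : (a:ℝ) ≤ 1 := by exact_mod_cast ha'
  rintro x ⟨h₁, h₂⟩
  push_cast at h₁ h₂
  constructor <;> rw [hscale] <;> nlinarith

lemma wfactor_eq_zero_of_notMem (b : Bool) (k l : ℤ) {x : ℝ} (hx : x ∉ dyI k l) :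
    wfactor b k l x = 0 := by
  have hleft : x ∉ dyI (k + 1) (2 * l) := fun h =>
    hx (dyI_succ_subset (a := 0) le_rfl zero_le_one (by simpa using h))
  have hright : x ∉ dyI (k + 1) (2 * l + 1) := fun h => hx (dyI_succ_subset zero_le_one le_rfl h)
  cases b
  · exact Set.indicator_of_notMem hx _
  · simp [wfactor, haarI, hleft, hright]

lemma measurableSet_dyI (k l : ℤ) : MeasurableSet (dyI k l) := measurableSet_Ico

lemma volume_real_dyI (k l : ℤ) : volume.real (dyI k l) = (2:ℝ) ^ (-k) := by
  rw [dyI, Real.volume_real_Ico_of_le (by have := zpow_pos (two_pos (α := ℝ)) (-k); linarith)]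
  ring

lemma integral_haarI (k l : ℤ) : ∫ x, haarI k l x = 0 := by
  have hint : ∀ l', Integrable ((dyI (k + 1) l').indicator (1 : ℝ → ℝ)) := fun l' =>
    (integrableOn_const measure_Ico_lt_top.ne).integrable_indicator (measurableSet_dyI _ _)
  unfold haarI
  rw [integral_sub (hint _) (hint _), integral_indicator_one (measurableSet_dyI _ _),
    integral_indicator_one (measurableSet_dyI _ _), volume_real_dyI, volume_real_dyI, sub_self]

lemma integral_wfactor_true (k l : ℤ) : ∫ x, (wfactor true k l x : ℂ) = 0 := by
  rw [integral_complex_ofReal, wfactor, if_pos rfl, integral_haarI, Complex.ofReal_zero]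

lemma prod_wfactor_eq_zero {ι : Type*} [Fintype ι] (s : ι → Bool) (k : ℤ) (I : ι → ℤ)
    {x : ι → ℝ} (hx : ¬ ∀ i, x i ∈ dyI k (I i)) : ∏ i, (wfactor (s i) k (I i) (x i) : ℂ) = 0 := by
  push Not at hx
  obtain ⟨i, hi⟩ := hx
  exact Finset.prod_eq_zero (Finset.mem_univ i) (by simp [wfactor_eq_zero_of_notMem _ _ _ hi])

lemma integral_prod_mul_prod_eq_zero {ι κ : Type*} [Fintype ι] [Fintype κ]
    (f : ι → ℝ → ℂ) (g : κ → ℝ → ℂ)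
    (h : (∃ i, ∫ x, f i x = 0) ∨ (∃ j, ∫ y, g j y = 0)) :
    ∫ z : (ι → ℝ) × (κ → ℝ), (∏ i, f i (z.1 i)) * ∏ j, g j (z.2 j) = 0 := by
  rw [Measure.volume_eq_prod,
    integral_prod_mul (fun x : ι → ℝ => ∏ i, f i (x i)) (fun y : κ → ℝ => ∏ j, g j (y j)),
    integral_fintype_prod_volume_eq_prod, integral_fintype_prod_volume_eq_prod]
  rcases h with ⟨i, hi⟩ | ⟨j, hj⟩
  · rw [Finset.prod_eq_zero (Finset.mem_univ i) hi, zero_mul]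
  · rw [Finset.prod_eq_zero (Finset.mem_univ j) hj, mul_zero]

lemma disjoint_cube_diagonal {ι κ : Type*} (k : ℤ) (I : ι → ℤ) (J : κ → ℤ)
    (hne : ¬ ((∀ i i', I i = I i') ∧ (∀ j j', J j = J j'))) :
    Disjoint {z : (ι → ℝ) × (κ → ℝ) | (∀ i, z.1 i ∈ dyI k (I i)) ∧ (∀ j, z.2 j ∈ dyI k (J j))}
      {z : (ι → ℝ) × (κ → ℝ) | (∃ x, ∀ i, z.1 i = x) ∧ (∃ y, ∀ j, z.2 j = y)} := by
  rw [Set.disjoint_left]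
  rintro z ⟨hI, hJ⟩ ⟨⟨x, hx⟩, ⟨y, hy⟩⟩
  exact hne ⟨fun i i' => eq_of_mem_dyI (hx i ▸ hI i) (hx i' ▸ hI i'),
    fun j j' => eq_of_mem_dyI (hy j ▸ hJ j) (hy j' ▸ hJ j')⟩

theorem stmt3_general (m n : ℕ) (K : (Fin m → ℝ) × (Fin n → ℝ) → ℂ)
    (hconst : ∀ (k : ℤ) (I : Fin m → ℤ) (J : Fin n → ℤ),
      Disjoint {z : (Fin m → ℝ) × (Fin n → ℝ) |
          (∀ i, z.1 i ∈ dyI k (I i)) ∧ (∀ j, z.2 j ∈ dyI k (J j))}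
        {z : (Fin m → ℝ) × (Fin n → ℝ) |
          (∃ x, ∀ i, z.1 i = x) ∧ (∃ y, ∀ j, z.2 j = y)} →
      ∀ z w : (Fin m → ℝ) × (Fin n → ℝ),
        ((∀ i, z.1 i ∈ dyI k (I i)) ∧ (∀ j, z.2 j ∈ dyI k (J j))) →
        ((∀ i, w.1 i ∈ dyI k (I i)) ∧ (∀ j, w.2 j ∈ dyI k (J j))) →
        K z = K w)
    (s : Fin m → Bool) (t : Fin n → Bool)
    (hst : (∃ i, s i = true) ∨ (∃ j, t j = true))
    (k : ℤ) (I : Fin m → ℤ) (J : Fin n → ℤ)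
    (hne : ¬ ((∀ i i', I i = I i') ∧ (∀ j j', J j = J j'))) :
    ∫ z : (Fin m → ℝ) × (Fin n → ℝ),
      K z * (∏ i, (wfactor (s i) k (I i) (z.1 i) : ℂ)) *
        ∏ j, (wfactor (t j) k (J j) (z.2 j) : ℂ) = 0 := by
  set z₀ : (Fin m → ℝ) × (Fin n → ℝ) :=
    (fun i => (2:ℝ) ^ (-k) * I i, fun j => (2:ℝ) ^ (-k) * J j)
  have hfactor : ∀ z : (Fin m → ℝ) × (Fin n → ℝ),
      K z * (∏ i, (wfactor (s i) k (I i) (z.1 i) : ℂ)) * ∏ j, (wfactor (t j) k (J j) (z.2 j) : ℂ) =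
      K z₀ * ((∏ i, (wfactor (s i) k (I i) (z.1 i) : ℂ)) *
        ∏ j, (wfactor (t j) k (J j) (z.2 j) : ℂ)) := fun z => by
    by_cases hI : ∀ i, z.1 i ∈ dyI k (I i)
    · by_cases hJ : ∀ j, z.2 j ∈ dyI k (J j)
      · rw [hconst k I J (disjoint_cube_diagonal k I J hne) z z₀ ⟨hI, hJ⟩
          ⟨fun i => two_zpow_mul_mem_dyI k _, fun j => two_zpow_mul_mem_dyI k _⟩, mul_assoc]
      · simp [prod_wfactor_eq_zero t k J hJ]
    · simp [prod_wfactor_eq_zero s k I hI]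
  simp_rw [hfactor]
  rw [integral_const_mul, integral_prod_mul_prod_eq_zero (fun i x => (wfactor (s i) k (I i) x : ℂ))
    (fun j y => (wfactor (t j) k (J j) y : ℂ)) ?_, mul_zero]
  rcases hst with ⟨i, hi⟩ | ⟨j, hj⟩
  · exact Or.inl ⟨i, by rw [hi, integral_wfactor_true]⟩
  · exact Or.inr ⟨j, by rw [hj, integral_wfactor_true]⟩

/-- If `K` is constant on dyadic cubes disjoint from the diagonal, at least one of the chosen
one-dimensional factors is a Haar function, and the dyadic intervals (all of the same length)
are not all equal in each group, then the corresponding wavelet coefficient of `K` vanishes. -/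
theorem stmt3 (m n : ℕ) (K : (Fin m → ℝ) × (Fin n → ℝ) → ℂ) (hK : Integrable K)
    (hconst : ∀ (k : ℤ) (I : Fin m → ℤ) (J : Fin n → ℤ),
      Disjoint {z : (Fin m → ℝ) × (Fin n → ℝ) |
          (∀ i, z.1 i ∈ dyI k (I i)) ∧ (∀ j, z.2 j ∈ dyI k (J j))}
        {z : (Fin m → ℝ) × (Fin n → ℝ) |
          (∃ x, ∀ i, z.1 i = x) ∧ (∃ y, ∀ j, z.2 j = y)} →
      ∀ z w : (Fin m → ℝ) × (Fin n → ℝ),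
        ((∀ i, z.1 i ∈ dyI k (I i)) ∧ (∀ j, z.2 j ∈ dyI k (J j))) →
        ((∀ i, w.1 i ∈ dyI k (I i)) ∧ (∀ j, w.2 j ∈ dyI k (J j))) →
        K z = K w)
    (s : Fin m → Bool) (t : Fin n → Bool)
    (hst : (∃ i, s i = true) ∨ (∃ j, t j = true))
    (k : ℤ) (I : Fin m → ℤ) (J : Fin n → ℤ)
    (hne : ¬ ((∀ i i', I i = I i') ∧ (∀ j j', J j = J j'))) :
    ∫ z : (Fin m → ℝ) × (Fin n → ℝ),
      K z * (∏ i, (wfactor (s i) k (I i) (z.1 i) : ℂ)) *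
        ∏ j, (wfactor (t j) k (J j) (z.2 j) : ℂ) = 0 :=
  stmt3_general m n K hconst s t hst k I J hne
end

section
/- Let G be a finite bipartite graph without isolated vertices whose connected components G_ℓ have bipartition classes X_ℓ and Y_ℓ. Define d_{i,j} = max{|X_ℓ|,|Y_ℓ|} if G_ℓ is complete bipartite or max{|X_ℓ|,|Y_ℓ|} ≤ 2, and d_{i,j} = max{|X_ℓ|,|Y_ℓ|}+1 otherwise, for every edge (i,j) of G_ℓ. If G has at least two connected components, then ∑_{(i,j)∈E} 1/d_{i,j} > 1. -/
/-!
Every vertex has a neighbour on the other side, so a component with classes `X_ℓ`, `Y_ℓ`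
has at least `m = max{|X_ℓ|,|Y_ℓ|}` edges (project the edges onto either side). Its edges
therefore contribute at least `m / m = 1` when `d = m`, and at least `m / (m + 1) ≥ 3/4` when
`d = m + 1` (which only happens for `m ≥ 3`). Two components thus contribute at least `3/2`.
-/

open Finset Sum

lemma three_div_four_le_div {m t D : ℕ} (hm : 1 ≤ m) (ht : m ≤ t)
    (hD : D = m ∨ 3 ≤ m ∧ D = m + 1) : (3 : ℝ) / 4 ≤ t / D := by
  have hm' : (1 : ℝ) ≤ m := by exact_mod_cast hm
  have ht' : (m : ℝ) ≤ t := by exact_mod_cast ht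
  rcases hD with rfl | ⟨hm3, rfl⟩
  · rw [le_div_iff₀ (by linarith)]
    linarith
  · have hm3' : (3 : ℝ) ≤ m := by exact_mod_cast hm3
    rw [le_div_iff₀ (by positivity)]
    push_cast
    linarith

namespace SimpleGraph

variable {X Y : Type*} (G : SimpleGraph (X ⊕ Y))

lemma exists_adj_inr_of_forall_exists_adj (hbipX : ∀ i i' : X, ¬ G.Adj (inl i) (inl i'))
    (hiso : ∀ v, ∃ w, G.Adj v w) (i : X) : ∃ j : Y, G.Adj (inl i) (inr j) := by
  obtain ⟨w | j, hw⟩ := hiso (inl i)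
  · exact absurd hw (hbipX i w)
  · exact ⟨j, hw⟩

lemma exists_adj_inl_of_forall_exists_adj (hbipY : ∀ j j' : Y, ¬ G.Adj (inr j) (inr j'))
    (hiso : ∀ v, ∃ w, G.Adj v w) (j : Y) : ∃ i : X, G.Adj (inl i) (inr j) := by
  obtain ⟨i | w, hw⟩ := hiso (inr j)
  · exact ⟨i, hw.symm⟩
  · exact absurd hw (hbipY j w)

noncomputable def maxClassCard (c : G.ConnectedComponent) : ℕ :=
  max (Nat.card {i : X // G.connectedComponentMk (inl i) = c})
    (Nat.card {j : Y // G.connectedComponentMk (inr j) = c})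

variable [Finite X] [Finite Y] in
lemma one_le_maxClassCard (c : G.ConnectedComponent) : 1 ≤ G.maxClassCard c := by
  induction c using ConnectedComponent.ind with | h v => ?_
  obtain i | j := v
  · have : Nonempty {i' : X // G.connectedComponentMk (inl i') = G.connectedComponentMk (inl i)} :=
      ⟨⟨i, rfl⟩⟩
    exact le_max_of_le_left Nat.card_pos
  · have : Nonempty {j' : Y // G.connectedComponentMk (inr j') = G.connectedComponentMk (inr j)} :=
      ⟨⟨j, rfl⟩⟩
    exact le_max_of_le_right Nat.card_pos

variable [Fintype X] [Fintype Y] [DecidableRel G.Adj]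

def crossEdgeFinset : Finset (X × Y) := {p | G.Adj (inl p.1) (inr p.2)}

variable [DecidableEq G.ConnectedComponent]

def crossEdgeFinsetIn (c : G.ConnectedComponent) : Finset (X × Y) :=
  {p ∈ G.crossEdgeFinset | G.connectedComponentMk (inl p.1) = c}

lemma mem_crossEdgeFinsetIn {c : G.ConnectedComponent} {p : X × Y} :
    p ∈ G.crossEdgeFinsetIn c ↔
      G.Adj (inl p.1) (inr p.2) ∧ G.connectedComponentMk (inl p.1) = c := by
  simp [crossEdgeFinsetIn, crossEdgeFinset]

lemma maxClassCard_le_card_crossEdgeFinsetIn (hX : ∀ i : X, ∃ j : Y, G.Adj (inl i) (inr j))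
    (hY : ∀ j : Y, ∃ i : X, G.Adj (inl i) (inr j)) (c : G.ConnectedComponent) :
    G.maxClassCard c ≤ #(G.crossEdgeFinsetIn c) := by
  refine max_le ?_ ?_ <;> rw [Nat.card_eq_fintype_card, Fintype.card_subtype]
  · refine card_le_card_of_surjOn Prod.fst fun i hi => ?_
    obtain ⟨j, hij⟩ := hX i
    exact ⟨(i, j), G.mem_crossEdgeFinsetIn.2 ⟨hij, by simpa using hi⟩, rfl⟩
  · refine card_le_card_of_surjOn Prod.snd fun j hj => ?_
    obtain ⟨i, hij⟩ := hY j
    have hc : G.connectedComponentMk (inl i) = c :=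
      (ConnectedComponent.sound hij.reachable).trans (by simpa using hj)
    exact ⟨(i, j), G.mem_crossEdgeFinsetIn.2 ⟨hij, hc⟩, rfl⟩

lemma three_div_four_le_sum_crossEdgeFinsetIn (hX : ∀ i : X, ∃ j : Y, G.Adj (inl i) (inr j))
    (hY : ∀ j : Y, ∃ i : X, G.Adj (inl i) (inr j)) (c : G.ConnectedComponent)
    {d : X × Y → ℕ} {D : ℕ}
    (hD : D = G.maxClassCard c ∨ 3 ≤ G.maxClassCard c ∧ D = G.maxClassCard c + 1)
    (hd : ∀ p ∈ G.crossEdgeFinsetIn c, d p = D) :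
    (3 : ℝ) / 4 ≤ ∑ p ∈ G.crossEdgeFinsetIn c, (1 : ℝ) / d p := by
  rw [sum_congr rfl fun p hp => by rw [hd p hp], sum_const, nsmul_eq_mul, mul_one_div]
  exact three_div_four_le_div (G.one_le_maxClassCard c)
    (G.maxClassCard_le_card_crossEdgeFinsetIn hX hY c) hD

end SimpleGraph

theorem stmt7_general {X Y : Type} [Fintype X] [Fintype Y]
    (G : SimpleGraph (X ⊕ Y)) [DecidableRel G.Adj]
    (hbipX : ∀ i i' : X, ¬ G.Adj (inl i) (inl i'))
    (hbipY : ∀ j j' : Y, ¬ G.Adj (inr j) (inr j'))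
    (hiso : ∀ v, ∃ w, G.Adj v w)
    (Xc Yc : G.ConnectedComponent → ℕ)
    (hXc : ∀ c, Xc c = Nat.card {i : X // G.connectedComponentMk (inl i) = c})
    (hYc : ∀ c, Yc c = Nat.card {j : Y // G.connectedComponentMk (inr j) = c})
    (complete : G.ConnectedComponent → Prop)
    (d : X × Y → ℕ)
    (hd1 : ∀ p : X × Y, G.Adj (inl p.1) (inr p.2) →
      (complete (G.connectedComponentMk (inl p.1)) ∨
        max (Xc (G.connectedComponentMk (inl p.1))) (Yc (G.connectedComponentMk (inl p.1))) ≤ 2) →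
      d p = max (Xc (G.connectedComponentMk (inl p.1))) (Yc (G.connectedComponentMk (inl p.1))))
    (hd2 : ∀ p : X × Y, G.Adj (inl p.1) (inr p.2) →
      ¬ (complete (G.connectedComponentMk (inl p.1)) ∨
        max (Xc (G.connectedComponentMk (inl p.1))) (Yc (G.connectedComponentMk (inl p.1))) ≤ 2) →
      d p = max (Xc (G.connectedComponentMk (inl p.1))) (Yc (G.connectedComponentMk (inl p.1))) + 1)
    (hcomp : ∃ c c' : G.ConnectedComponent, c ≠ c') :
    1 < ∑ p ∈ Finset.univ.filter (fun p : X × Y => G.Adj (inl p.1) (inr p.2)),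
      (1 : ℝ) / d p := by
  classical
  have hX := G.exists_adj_inr_of_forall_exists_adj hbipX hiso
  have hY := G.exists_adj_inl_of_forall_exists_adj hbipY hiso
  have hcomponent (c : G.ConnectedComponent) :
      (3 : ℝ) / 4 ≤ ∑ p ∈ G.crossEdgeFinsetIn c, (1 : ℝ) / d p := by
    have hm : max (Xc c) (Yc c) = G.maxClassCard c := by rw [hXc, hYc, SimpleGraph.maxClassCard]
    by_cases h : complete c ∨ max (Xc c) (Yc c) ≤ 2
    · refine G.three_div_four_le_sum_crossEdgeFinsetIn hX hY c (.inl hm) fun p hp => ?_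
      obtain ⟨hadj, rfl⟩ := G.mem_crossEdgeFinsetIn.1 hp
      exact hd1 p hadj h
    · refine G.three_div_four_le_sum_crossEdgeFinsetIn hX hY c (.inr ⟨by omega, by rw [← hm]⟩)
        fun p hp => ?_
      obtain ⟨hadj, rfl⟩ := G.mem_crossEdgeFinsetIn.1 hp
      exact hd2 p hadj h
  obtain ⟨c, c', hcc⟩ := hcomp
  have htwo : 1 < Fintype.card G.ConnectedComponent := Fintype.one_lt_card_iff.2 ⟨c, c', hcc⟩
  calc (1 : ℝ) < 2 * (3 / 4) := by norm_num
    _ ≤ ∑ _c : G.ConnectedComponent, (3 : ℝ) / 4 := by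
        rw [sum_const, card_univ, nsmul_eq_mul]
        gcongr
        exact_mod_cast htwo
    _ ≤ ∑ c, ∑ p ∈ G.crossEdgeFinsetIn c, (1 : ℝ) / d p := sum_le_sum fun c _ => hcomponent c
    _ = _ := sum_fiberwise_of_maps_to (fun _ _ => mem_univ _) _

/-- For a finite bipartite graph without isolated vertices whose thresholds `d` are defined
componentwise (`max{|X_ℓ|,|Y_ℓ|}` for complete or small components, `max{|X_ℓ|,|Y_ℓ|}+1`
otherwise), having at least two connected components forces `∑_{(i,j)∈E} 1/d_{i,j} > 1`. -/
theorem stmt7 {X Y : Type} [Fintype X] [Fintype Y]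
    (G : SimpleGraph (X ⊕ Y)) [DecidableRel G.Adj]
    (hbipX : ∀ i i' : X, ¬ G.Adj (inl i) (inl i'))
    (hbipY : ∀ j j' : Y, ¬ G.Adj (inr j) (inr j'))
    (hiso : ∀ v, ∃ w, G.Adj v w)
    (Xc Yc : G.ConnectedComponent → ℕ)
    (hXc : ∀ c, Xc c = Nat.card {i : X // G.connectedComponentMk (inl i) = c})
    (hYc : ∀ c, Yc c = Nat.card {j : Y // G.connectedComponentMk (inr j) = c})
    (complete : G.ConnectedComponent → Prop)
    (hcomplete : ∀ c, complete c ↔ ∀ (i : X) (j : Y),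
        G.connectedComponentMk (inl i) = c → G.connectedComponentMk (inr j) = c →
        G.Adj (inl i) (inr j))
    (d : X × Y → ℕ)
    (hd1 : ∀ p : X × Y, G.Adj (inl p.1) (inr p.2) →
      (complete (G.connectedComponentMk (inl p.1)) ∨
        max (Xc (G.connectedComponentMk (inl p.1))) (Yc (G.connectedComponentMk (inl p.1))) ≤ 2) →
      d p = max (Xc (G.connectedComponentMk (inl p.1))) (Yc (G.connectedComponentMk (inl p.1))))
    (hd2 : ∀ p : X × Y, G.Adj (inl p.1) (inr p.2) →
      ¬ (complete (G.connectedComponentMk (inl p.1)) ∨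
        max (Xc (G.connectedComponentMk (inl p.1))) (Yc (G.connectedComponentMk (inl p.1))) ≤ 2) →
      d p = max (Xc (G.connectedComponentMk (inl p.1))) (Yc (G.connectedComponentMk (inl p.1))) + 1)
    (hcomp : ∃ c c' : G.ConnectedComponent, c ≠ c') :
    1 < ∑ p ∈ Finset.univ.filter (fun p : X × Y => G.Adj (inl p.1) (inr p.2)),
      (1 : ℝ) / d p :=
  stmt7_general G hbipX hbipY hiso Xc Yc hXc hYc complete d hd1 hd2 hcomp
end
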